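/- (Lemma 3, second part, cone form.) Let V be a real topological vector space and C ⊆ V a nonempty open convex cone with C ≠ V. Let T, Λ ∈ closure(C) \ C (both 'nef but not ample'), and assume that (1−s) • T + s • Λ ∈ C for every s ∈ (0,1). Then for every t ∈ (0,1), writing L_t := (1−t) • T + t • Λ, the Seshadri-type threshold satisfies σ(Λ, L_t) = 1/t, i.e. sInf {λ ∈ ℝ | λ • L_t − Λ ∈ C} = 1/t. -/

import Mathlib

/-!
Write `L_t = (1 - t) • T + t • Λ`, so that `l • L_t - Λ = (l (1 - t)) • T + (l t - 1) • Λ`.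
For `l > 1/t` both coefficients are positive, and a positive combination of `T` and `Λ` is
a positive multiple of a point of the open segment `]T, Λ[ ⊆ C`. For `l ≤ 1/t`, membership
in `C` would give `(l (1 - t)) • T ∈ C + closure C ⊆ C` (as `C` is open), which is
impossible for a boundary point `T`. Hence the set in question is exactly `]1/t, ∞[`.
-/

open Set Pointwise

namespace ConvexCone

variable {𝕜 E : Type*} [Field 𝕜] [LinearOrder 𝕜] [AddCommGroup E] [Module 𝕜 E]
  {K : ConvexCone 𝕜 E}

section Topological

variable [TopologicalSpace E] [IsTopologicalAddGroup E]

theorem add_mem_of_mem_closure (hK : IsOpen (K : Set E)) {x y : E} (hx : x ∈ K)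
    (hy : y ∈ closure (K : Set E)) : x + y ∈ K := by
  have : x + y ∈ (K : Set E) + (K : Set E) := hK.add_closure (K : Set E) ▸ add_mem_add hx hy
  obtain ⟨a, ha, b, hb, hab⟩ := this
  exact hab ▸ K.add_mem ha hb

variable [ContinuousConstSMul 𝕜 E]

theorem add_smul_mem_of_mem_closure (hK : IsOpen (K : Set E)) {x y : E} (hx : x ∈ K)
    (hy : y ∈ closure (K : Set E)) {c : 𝕜} (hc : 0 ≤ c) : x + c • y ∈ K := by
  rcases hc.eq_or_lt with rfl | hc
  · simpa using hx
  · exact add_mem_of_mem_closure hK hx (K.closure.smul_mem hc hy)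

variable [IsStrictOrderedRing 𝕜]

theorem smul_notMem_of_mem_closure_of_notMem (hK : IsOpen (K : Set E)) {x : E}
    (hx : x ∈ closure (K : Set E)) (hxK : x ∉ K) (c : 𝕜) : c • x ∉ K := by
  intro hcx
  rcases le_or_gt c 0 with hc | hc
  · -- `0 = c • x + (-c) • x` would lie in `K`, and then so would `0 + x`.
    have h0 : (0 : E) ∈ K := by
      simpa using add_smul_mem_of_mem_closure hK hcx hx (neg_nonneg.mpr hc)
    exact hxK (by simpa using add_smul_mem_of_mem_closure hK h0 hx zero_le_one)
  · exact hxK ((K.smul_mem_iff hc).mp hcx)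

end Topological

variable [IsStrictOrderedRing 𝕜]

theorem smul_add_smul_mem_of_openSegment_subset {x y : E}
    (h : openSegment 𝕜 x y ⊆ K) {a b : 𝕜} (ha : 0 < a) (hb : 0 < b) :
    a • x + b • y ∈ K := by
  have hab : 0 < a + b := add_pos ha hb
  have hseg : (a / (a + b)) • x + (b / (a + b)) • y ∈ K :=
    h ⟨_, _, div_pos ha hab, div_pos hb hab, by rw [← add_div, div_self hab.ne'], rfl⟩
  convert K.smul_mem hab hseg using 1
  simp only [smul_add, smul_smul, mul_div_cancel₀ _ hab.ne']

variable [TopologicalSpace E] [IsTopologicalAddGroup E] [ContinuousConstSMul 𝕜 E]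

theorem setOf_smul_combo_sub_mem_eq_Ioi (hK : IsOpen (K : Set E)) {T Λ : E}
    (hT : T ∈ closure (K : Set E) \ K) (hΛ : Λ ∈ closure (K : Set E))
    (hseg : openSegment 𝕜 T Λ ⊆ K) {t : 𝕜} (ht : t ∈ Ioo 0 1) :
    {l : 𝕜 | l • ((1 - t) • T + t • Λ) - Λ ∈ K} = Ioi (1 / t) := by
  ext l
  simp only [mem_ofPred_eq, mem_Ioi, div_lt_iff₀ ht.1]
  constructor
  · intro hl
    by_contra! hlt
    refine smul_notMem_of_mem_closure_of_notMem hK hT.1 hT.2 (l * (1 - t)) ?_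
    have : (l * (1 - t)) • T = (l • ((1 - t) • T + t • Λ) - Λ) + (1 - l * t) • Λ := by
      module
    exact this ▸ add_smul_mem_of_mem_closure hK hl hΛ (sub_nonneg.mpr hlt)
  · intro hlt
    have hl : 0 < l := pos_of_mul_pos_left (one_pos.trans hlt) ht.1.le
    have : l • ((1 - t) • T + t • Λ) - Λ = (l * (1 - t)) • T + (l * t - 1) • Λ := by
      module
    exact this ▸ smul_add_smul_mem_of_openSegment_subset hseg
      (mul_pos hl (sub_pos.mpr ht.2)) (sub_pos.mpr hlt)

end ConvexCone

theorem lemma_one_over_t_second_part_general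
    {V : Type*} [AddCommGroup V] [Module ℝ V] [TopologicalSpace V]
    [IsTopologicalAddGroup V] [ContinuousSMul ℝ V]
    (C : Set V) (hC_open : IsOpen C)
    (hC_cone : ∀ x ∈ C, ∀ y ∈ C, ∀ a b : ℝ, 0 < a → 0 < b → a • x + b • y ∈ C)
    (T : V) (hT : T ∈ closure C \ C) (Λ : V) (hΛ : Λ ∈ closure C \ C)
    (hseg : ∀ s ∈ Set.Ioo (0 : ℝ) 1, (1 - s) • T + s • Λ ∈ C) :
    ∀ t ∈ Set.Ioo (0 : ℝ) 1,
      sInf {l : ℝ | l • ((1 - t) • T + t • Λ) - Λ ∈ C} = 1 / t := by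
  intro t ht
  have hsmul (c : ℝ) (hc : 0 < c) (x : V) (hx : x ∈ C) : c • x ∈ C := by
    simpa [← add_smul] using hC_cone x hx x hx (c / 2) (c / 2) (half_pos hc) (half_pos hc)
  let K : ConvexCone ℝ V :=
    { carrier := C
      smul_mem' := hsmul
      add_mem' := fun x hx y hy => by simpa using hC_cone x hx y hy 1 1 one_pos one_pos }
  have hsegK : openSegment ℝ T Λ ⊆ K := by
    rw [openSegment_eq_image]
    exact image_subset_iff.mpr hseg
  rw [show {l : ℝ | l • ((1 - t) • T + t • Λ) - Λ ∈ C} = Ioi (1 / t) from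
    K.setOf_smul_combo_sub_mem_eq_Ioi hC_open hT hΛ.1 hsegK ht]
  exact csInf_Ioi

/-- Lemma 3, second part, cone form: with `T, Λ ∈ closure C \ C`
both 'nef but not ample', and assuming `(1-s) • T + s • Λ ∈ C` for every
`s ∈ (0,1)`, we have `σ(Λ, L_t) = 1/t` for every `t ∈ (0,1)`,
where `L_t = (1-t) • T + t • Λ`. -/
theorem lemma_one_over_t_second_part
    {V : Type*} [AddCommGroup V] [Module ℝ V] [TopologicalSpace V]
    [IsTopologicalAddGroup V] [ContinuousSMul ℝ V]
    (C : Set V) (hC_open : IsOpen C) (hC_ne : C.Nonempty) (hC_proper : C ≠ Set.univ)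
    (hC_cone : ∀ x ∈ C, ∀ y ∈ C, ∀ a b : ℝ, 0 < a → 0 < b → a • x + b • y ∈ C)
    (T : V) (hT : T ∈ closure C \ C) (Λ : V) (hΛ : Λ ∈ closure C \ C)
    (hseg : ∀ s ∈ Set.Ioo (0 : ℝ) 1, (1 - s) • T + s • Λ ∈ C) :
    ∀ t ∈ Set.Ioo (0 : ℝ) 1,
      sInf {l : ℝ | l • ((1 - t) • T + t • Λ) - Λ ∈ C} = 1 / t :=
  lemma_one_over_t_second_part_general C hC_open hC_cone T hT Λ hΛ hseg
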